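/- Nonexistence of a GR(1) assumption: for the turn-based game graph of Figure 2, for every initial node v ∈ V, there does not exist a GR(1) property P of the form □ρ ∧ ⋀_{i∈I} □◇P_i — where I is a finite index set, each P_i ⊆ V is a set of nodes, and ρ ⊆ ρ1 is a subset of player 1's edge relation — such that both: (i) player 1, restricted to choosing only edges in ρ, has a strategy from v all of whose consistent plays satisfy ⋀_{i∈I} □◇P_i; and (ii) player 0 has a strategy from v all of whose consistent plays satisfy (□ρ ∧ ⋀_{i∈I} □◇P_i) → (□◇G1 ∧ □◇G2), where a play satisfies □ρ if every step taken from a node owned by player 1 is an edge of ρ. -/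

import Mathlib

/-!
Everything is read off the limit set of a play, the set of nodes it visits infinitely often:
a play satisfies `□◇P` iff `P` meets its limit set, and every node of the limit set has a
predecessor and a successor in it along the moves the play makes. Once one player's moves are
fixed positionally, a finite check over all subsets of the seven nodes bounds the limit set.

Player 1's strategy must satisfy every `□◇(Ps i)` when player 0 traps the play in `{s2, s3}`, so
every `Ps i` meets `{s2, s3}`. When player 0 never moves to `s2`, the play either ends up
alternating in `{s0, s1}`, and every `Ps i` meets `{s0, s1}`, or it cycles through `s3 s4 s5 s6`,
so `s4 → s5 ∈ ρ'` and every `Ps i` meets `{s3, s4, s5, s6}`. Against player 1's own strategy,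
player 0's winning strategy leads from `s6` back to `s0`, which is only possible through
`s4 → s1`, so `s4 → s1 ∈ ρ'`. In the first case, player 1 always answering `s4 → s1` satisfies
the assumption, yet `s6` is not visited again. In the second case, player 1 always answering
`s4 → s5` either keeps the play in `{s0, s1}`, where it is also consistent with player 1's own
strategy and so satisfies the assumption without visiting `s6`, or satisfies the assumption
without returning to `s0`.
-/

namespace Fig2

/-- Nodes `s0, …, s6` of the game graph of Figure 2. -/
abbrev V := Fin 7

/-- Player 0 owns the odd-indexed nodes `s1, s3, s5`;
player 1 owns the even-indexed nodes `s0, s2, s4, s6`. -/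
def owner : V → Fin 2 := fun v => if v.val % 2 = 1 then 0 else 1

/-- The edge relation of player `j`:
`ρ0 = {s1→s0, s1→s2, s3→s2, s3→s4, s5→s6}` and
`ρ1 = {s0→s1, s2→s3, s4→s1, s4→s5, s6→s3}`. -/
def ρ : Fin 2 → V → V → Prop := fun j v u =>
  ((j.val, v.val, u.val) : ℕ × ℕ × ℕ) ∈
    [(0,1,0), (0,1,2), (0,3,2), (0,3,4), (0,5,6),
     (1,0,1), (1,2,3), (1,4,1), (1,4,5), (1,6,3)]

/-- An infinite play: every step is an edge of the player owning the current node. -/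
def IsPlay (w : ℕ → V) : Prop := ∀ k : ℕ, ρ (owner (w k)) (w k) (w (k + 1))

/-- A strategy maps a finite history together with the current node to the next node. -/
abbrev Strategy := List V → V → V

/-- A strategy of player `j` must choose edges of `ρ j` at nodes owned by player `j`. -/
def ValidStrategy (j : Fin 2) (σ : Strategy) : Prop :=
  ∀ (h : List V) (v : V), owner v = j → ρ j v (σ h v)

/-- A play is consistent with a strategy of player `j` if at every position owned
by player `j`, the next node is the one chosen by the strategy. -/
def Consistent (j : Fin 2) (σ : Strategy) (w : ℕ → V) : Prop :=
  ∀ k : ℕ, owner (w k) = j → w (k + 1) = σ ((List.range k).map w) (w k)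

/-- `□◇P`: the play visits `P` infinitely often. -/
def InfOften (P : Set V) (w : ℕ → V) : Prop := ∀ N : ℕ, ∃ k ≥ N, w k ∈ P

/-- Player `j` realizes property `φ` from node `v`. -/
def Realizes (j : Fin 2) (v : V) (φ : (ℕ → V) → Prop) : Prop :=
  ∃ σ : Strategy, ValidStrategy j σ ∧
    ∀ w : ℕ → V, IsPlay w → w 0 = v → Consistent j σ w → φ w

/-- The goal set `G1 = {s6}` of the game of Figure 2. -/
def G1 : Set V := {6}

/-- The goal set `G2 = {s0}` of the game of Figure 2. -/
def G2 : Set V := {0}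

open Filter

section LimitSet

variable {α : Type*}

theorem frequently_atTop_succ_iff {p : ℕ → Prop} :
    (∃ᶠ k in atTop, p (k + 1)) ↔ ∃ᶠ k in atTop, p k := by
  conv_rhs => rw [← map_add_atTop_eq_nat 1]
  exact frequently_map.symm

-- Lets `decide` range over all subsets of a finite type, as indicator functions.
theorem forall_set_of_forall_bool {p : Set α → Prop} (h : ∀ T : α → Bool, p {a | T a})
    (S : Set α) : p S := by
  classical
  simpa using h (fun a => decide (a ∈ S))

theorem eventually_mem_of_closed {E : α → α → Prop} {w : ℕ → α} {S : Set α}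
    (hE : ∀ k, E (w k) (w (k + 1))) (hS : ∀ a b, E a b → a ∈ S → b ∈ S) {k : ℕ}
    (hk : w k ∈ S) : ∀ᶠ j in atTop, w j ∈ S :=
  eventually_atTop.2 ⟨k, fun j hj => Nat.le_induction hk (fun j _ ih => hS _ _ (hE j) ih) j hj⟩

def limitSet (w : ℕ → α) : Set α := {a | ∃ᶠ k in atTop, w k = a}

theorem frequently_mem_iff_inter_limitSet_nonempty [Finite α] {w : ℕ → α} {P : Set α} :
    (∃ᶠ k in atTop, w k ∈ P) ↔ (limitSet w ∩ P).Nonempty := by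
  calc (∃ᶠ k in atTop, w k ∈ P) ↔ ∃ᶠ k in atTop, ∃ a, w k = a ∧ a ∈ P := by simp
    _ ↔ ∃ a, ∃ᶠ k in atTop, w k = a ∧ a ∈ P := frequently_exists
    _ ↔ (limitSet w ∩ P).Nonempty := by simp [Set.Nonempty, limitSet, frequently_and_distrib_right]

theorem limitSet_subset_of_eventually {w : ℕ → α} {S : Set α} (h : ∀ᶠ k in atTop, w k ∈ S) :
    limitSet w ⊆ S := fun a ha => by
  obtain ⟨k, hk, rfl⟩ := (h.and_frequently ha).exists
  exact hk

def IsRecurrent (E : α → α → Prop) (T : Set α) : Prop :=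
  T.Nonempty ∧ ∀ a ∈ T, (∃ b ∈ T, E a b) ∧ ∃ b ∈ T, E b a

theorem isRecurrent_limitSet [Finite α] {E : α → α → Prop} {w : ℕ → α}
    (hE : ∀ k, E (w k) (w (k + 1))) : IsRecurrent E (limitSet w) := by
  refine ⟨?_, fun a ha => ⟨?_, ?_⟩⟩
  · simpa using frequently_mem_iff_inter_limitSet_nonempty.1
      (Frequently.of_forall (f := atTop) fun k => Set.mem_univ (w k))
  · have : ∃ᶠ k in atTop, w (k + 1) ∈ {b | E a b} := ha.mono fun k hk => hk ▸ hE k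
    exact frequently_mem_iff_inter_limitSet_nonempty.1 (frequently_atTop_succ_iff.1 this)
  · have : ∃ᶠ k in atTop, w k ∈ {b | E b a} :=
      (frequently_atTop_succ_iff.2 ha).mono fun k hk => hk ▸ hE k
    exact frequently_mem_iff_inter_limitSet_nonempty.1 this

end LimitSet

instance (j : Fin 2) : DecidableRel (ρ j) := fun _ _ => by unfold ρ; infer_instance

theorem owner_eq_one_of_ne_zero {a : V} (h : owner a ≠ 0) : owner a = 1 := by
  unfold owner at *; split_ifs at * <;> simp_all

theorem infOften_iff_inter_limitSet_nonempty (P : Set V) (w : ℕ → V) :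
    InfOften P w ↔ (limitSet w ∩ P).Nonempty :=
  frequently_atTop.symm.trans frequently_mem_iff_inter_limitSet_nonempty

theorem InfOften.inter_nonempty_of_limitSet_subset {P S : Set V} {w : ℕ → V}
    (h : InfOften P w) (hS : limitSet w ⊆ S) : (S ∩ P).Nonempty :=
  ((infOften_iff_inter_limitSet_nonempty P w).1 h).mono (Set.inter_subset_inter_left _ hS)

theorem infOften_of_subset_limitSet {P S : Set V} {w : ℕ → V} (h : (S ∩ P).Nonempty)
    (hS : S ⊆ limitSet w) : InfOften P w :=
  (infOften_iff_inter_limitSet_nonempty P w).2 (h.mono (Set.inter_subset_inter_left _ hS))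

def run (σ τ : Strategy) (v : V) : ℕ → List V × V
  | 0 => ([], v)
  | k + 1 =>
    let p := run σ τ v k
    (p.1 ++ [p.2], if owner p.2 = 0 then σ p.1 p.2 else τ p.1 p.2)

def outcome (σ τ : Strategy) (v : V) (k : ℕ) : V := (run σ τ v k).2

section Outcome

variable {σ τ : Strategy} {v : V}

theorem run_fst (k : ℕ) : (run σ τ v k).1 = (List.range k).map (outcome σ τ v) := by
  induction k with
  | zero => rfl
  | succ k ih => simp [run, List.range_succ, ih, outcome]

theorem outcome_succ (k : ℕ) : outcome σ τ v (k + 1) =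
    if owner (outcome σ τ v k) = 0 then σ ((List.range k).map (outcome σ τ v)) (outcome σ τ v k)
    else τ ((List.range k).map (outcome σ τ v)) (outcome σ τ v k) := by
  simp only [outcome, run, run_fst]
  rfl

theorem consistent_outcome_zero : Consistent 0 σ (outcome σ τ v) := fun k hk => by
  rw [outcome_succ, if_pos hk]

theorem consistent_outcome_one : Consistent 1 τ (outcome σ τ v) := fun k hk => by
  rw [outcome_succ, if_neg (by rw [hk]; decide)]

theorem isPlay_outcome (hσ : ValidStrategy 0 σ) (hτ : ValidStrategy 1 τ) :
    IsPlay (outcome σ τ v) := fun k => by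
  by_cases h : owner (outcome σ τ v k) = 0
  · rw [h, consistent_outcome_zero k h]; exact hσ _ _ h
  · have h := owner_eq_one_of_ne_zero h
    rw [h, consistent_outcome_one k h]; exact hτ _ _ h

end Outcome

def Ensures (j : Fin 2) (σ : Strategy) (v : V) (φ : (ℕ → V) → Prop) : Prop :=
  ∀ w : ℕ → V, IsPlay w → w 0 = v → Consistent j σ w → φ w

theorem Ensures.outcome_zero {σ τ : Strategy} {v : V} {φ : (ℕ → V) → Prop}
    (h : Ensures 0 σ v φ) (hσ : ValidStrategy 0 σ) (hτ : ValidStrategy 1 τ) :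
    φ (outcome σ τ v) :=
  h _ (isPlay_outcome hσ hτ) rfl consistent_outcome_zero

theorem Ensures.outcome_one {σ τ : Strategy} {v : V} {φ : (ℕ → V) → Prop}
    (h : Ensures 1 τ v φ) (hσ : ValidStrategy 0 σ) (hτ : ValidStrategy 1 τ) :
    φ (outcome σ τ v) :=
  h _ (isPlay_outcome hσ hτ) rfl consistent_outcome_one

def positional (f : V → V) : Strategy := fun _ a => f a

theorem validStrategy_positional {j : Fin 2} {f : V → V} (hf : ∀ a, owner a = j → ρ j a (f a)) :
    ValidStrategy j (positional f) := fun _ => hf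

def StepWith (j : Fin 2) (f : V → V) (a b : V) : Prop :=
  ρ (owner a) a b ∧ (owner a = j → b = f a)

instance (j : Fin 2) (f : V → V) : DecidableRel (StepWith j f) := fun _ _ => by
  unfold StepWith; infer_instance

theorem IsPlay.stepWith {w : ℕ → V} {j : Fin 2} {f : V → V} (hw : IsPlay w)
    (hc : Consistent j (positional f) w) (k : ℕ) : StepWith j f (w k) (w (k + 1)) :=
  ⟨hw k, hc k⟩

-- Only the entries at the nodes of the player using the strategy matter.
def cycle23 : V → V := ![1, 2, 3, 2, 1, 6, 3]

def avoid2 : V → V := ![1, 0, 3, 4, 1, 6, 3]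

def via41 : V → V := ![1, 2, 3, 2, 1, 6, 3]

def via45 : V → V := ![1, 2, 3, 2, 5, 6, 3]

theorem validStrategy_cycle23 : ValidStrategy 0 (positional cycle23) :=
  validStrategy_positional (by decide)

theorem validStrategy_avoid2 : ValidStrategy 0 (positional avoid2) :=
  validStrategy_positional (by decide)

theorem validStrategy_via41 : ValidStrategy 1 (positional via41) :=
  validStrategy_positional (by decide)

theorem validStrategy_via45 : ValidStrategy 1 (positional via45) :=
  validStrategy_positional (by decide)

theorem subset_of_isRecurrent_cycle23 :
    ∀ T : Set V, IsRecurrent (StepWith 0 cycle23) T → T ⊆ {2, 3} := by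
  refine forall_set_of_forall_bool ?_
  simp only [IsRecurrent, Set.Nonempty, Set.subset_def, Set.mem_ofPred_eq, Set.mem_insert_iff,
    Set.mem_singleton_iff]
  decide +kernel

theorem mem_01_of_stepWith_avoid2 :
    ∀ a b, StepWith 0 avoid2 a b → a ∈ ({0, 1} : Set V) → b ∈ ({0, 1} : Set V) := by
  simp only [Set.mem_insert_iff, Set.mem_singleton_iff]
  decide

theorem subset_of_isRecurrent_avoid2 :
    ∀ T : Set V, IsRecurrent (StepWith 0 avoid2) T → T ⊆ {0, 1}ᶜ → 4 ∈ T ∧ T ⊆ {3, 4, 5, 6} := by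
  refine forall_set_of_forall_bool ?_
  simp only [IsRecurrent, Set.Nonempty, Set.subset_def, Set.mem_ofPred_eq, Set.mem_insert_iff,
    Set.mem_singleton_iff, Set.mem_compl_iff]
  decide +kernel

theorem of_isRecurrent_via41 :
    ∀ T : Set V, IsRecurrent (StepWith 1 via41) T → 6 ∉ T ∧ ({0, 1} ⊆ T ∨ {2, 3} ⊆ T) := by
  refine forall_set_of_forall_bool ?_
  simp only [IsRecurrent, Set.Nonempty, Set.subset_def, Set.mem_ofPred_eq, Set.mem_insert_iff,
    Set.mem_singleton_iff]
  decide +kernel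

theorem of_isRecurrent_via45 :
    ∀ T : Set V, IsRecurrent (StepWith 1 via45) T → T ⊆ {0, 1}ᶜ →
      {2, 3} ⊆ T ∨ {3, 4, 5, 6} ⊆ T := by
  refine forall_set_of_forall_bool ?_
  simp only [IsRecurrent, Set.Nonempty, Set.subset_def, Set.mem_ofPred_eq, Set.mem_insert_iff,
    Set.mem_singleton_iff, Set.mem_compl_iff]
  decide +kernel

theorem eq_four_one_of_enters_01 :
    ∀ a b, ρ (owner a) a b → a ∉ ({0, 1} : Set V) → b ∈ ({0, 1} : Set V) → a = 4 ∧ b = 1 := by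
  simp only [Set.mem_insert_iff, Set.mem_singleton_iff]
  decide

def MovesAlong (ρ' : V → V → Prop) (τ : Strategy) : Prop :=
  ∀ (h : List V) (u : V), owner u = 1 → ρ' u (τ h u)

def Respects (ρ' : V → V → Prop) (w : ℕ → V) : Prop :=
  ∀ k : ℕ, owner (w k) = 1 → ρ' (w k) (w (k + 1))

def GR1Assumption {ι : Type*} (ρ' : V → V → Prop) (Ps : ι → Set V) (w : ℕ → V) : Prop :=
  Respects ρ' w ∧ ∀ i, InfOften (Ps i) w

theorem respects_outcome {ρ' : V → V → Prop} {σ τ : Strategy} (hτ : MovesAlong ρ' τ) (v : V) :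
    Respects ρ' (outcome σ τ v) := fun k hk => by
  rw [consistent_outcome_one k hk]; exact hτ _ _ hk

theorem MovesAlong.rel_of_forced {ρ' : V → V → Prop} {τ : Strategy} (hτ : MovesAlong ρ' τ)
    (hsub : ∀ a b, ρ' a b → ρ 1 a b) {a b : V} (ha : owner a = 1) (hb : ∀ c, ρ 1 a c → c = b) :
    ρ' a b := by
  have h := hτ [] a ha
  rwa [hb _ (hsub _ _ h)] at h

theorem limitSet_outcome_cycle23 {τ : Strategy} (hτ : ValidStrategy 1 τ) (v : V) :
    limitSet (outcome (positional cycle23) τ v) ⊆ {2, 3} :=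
  subset_of_isRecurrent_cycle23 _ <| isRecurrent_limitSet <|
    (isPlay_outcome validStrategy_cycle23 hτ).stepWith consistent_outcome_zero

theorem rel_four_one_of_infOften {ρ' : V → V → Prop} {w : ℕ → V} (hw : IsPlay w)
    (hρ' : Respects ρ' w) (hG : InfOften G1 w ∧ InfOften G2 w) : ρ' 4 1 := by
  by_contra h41
  have hE : ∀ k, ρ (owner (w k)) (w k) (w (k + 1)) ∧ ¬ (w k = 4 ∧ w (k + 1) = 1) := by
    refine fun k => ⟨hw k, ?_⟩
    rintro ⟨h4, h1⟩
    exact h41 (by simpa [h4, h1] using hρ' k (by rw [h4]; decide))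
  have hstay : ∀ a b, (ρ (owner a) a b ∧ ¬ (a = 4 ∧ b = 1)) → a ∈ ({0, 1} : Set V)ᶜ →
      b ∈ ({0, 1} : Set V)ᶜ :=
    fun a b hab ha hb => hab.2 (eq_four_one_of_enters_01 a b hab.1 ha hb)
  obtain ⟨k, -, hk⟩ := hG.1 0
  have hout := limitSet_subset_of_eventually <|
    eventually_mem_of_closed hE hstay (k := k) (by rw [show w k = 6 from hk]; decide)
  obtain ⟨a, ha, rfl⟩ := (infOften_iff_inter_limitSet_nonempty _ _).1 hG.2
  exact hout ha (by simp)

theorem limitSet_outcome_avoid2 {ρ' : V → V → Prop} {τ : Strategy} (hτ : ValidStrategy 1 τ)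
    (hτρ' : MovesAlong ρ' τ) (v : V) :
    limitSet (outcome (positional avoid2) τ v) ⊆ {0, 1} ∨
      (ρ' 4 5 ∧ limitSet (outcome (positional avoid2) τ v) ⊆ {3, 4, 5, 6}) := by
  set w := outcome (positional avoid2) τ v
  have hE := (isPlay_outcome validStrategy_avoid2 hτ (v := v)).stepWith consistent_outcome_zero
  by_cases hhit : ∃ k, w k ∈ ({0, 1} : Set V)
  · obtain ⟨k, hk⟩ := hhit
    exact .inl <| limitSet_subset_of_eventually <|
      eventually_mem_of_closed hE mem_01_of_stepWith_avoid2 hk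
  · simp only [not_exists] at hhit
    obtain ⟨h4, hsub⟩ := subset_of_isRecurrent_avoid2 _ (isRecurrent_limitSet hE)
      (limitSet_subset_of_eventually (Eventually.of_forall hhit))
    obtain ⟨k, hk⟩ := h4.exists
    have hmove : w (k + 1) = τ ((List.range k).map w) 4 :=
      hk ▸ consistent_outcome_one k (by rw [hk]; decide)
    have h15 : ∀ c, ρ 1 4 c → c = 1 ∨ c = 5 := by decide
    rcases h15 _ (hτ _ 4 rfl) with h | h
    · exact absurd (by rw [hmove, h]; simp) (hhit (k + 1))
    · exact .inr ⟨h ▸ hτρ' _ 4 rfl, hsub⟩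

theorem not_ensures_via41 {ι : Type*} {ρ' : V → V → Prop} {Ps : ι → Set V} {σ : Strategy}
    (hσ : ValidStrategy 0 σ) (h01 : ρ' 0 1) (h23 : ρ' 2 3) (h41 : ρ' 4 1) (h63 : ρ' 6 3)
    (hP : ∀ i, ({0, 1} ∩ Ps i).Nonempty ∧ ({2, 3} ∩ Ps i).Nonempty) (v : V) :
    ¬ Ensures 0 σ v (fun w => GR1Assumption ρ' Ps w → InfOften G1 w ∧ InfOften G2 w) := by
  intro hwin
  have hτ : MovesAlong ρ' (positional via41) := fun _ a ha => by
    fin_cases a <;> first | exact absurd ha (by decide) | assumption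
  obtain ⟨h6, h0123⟩ := of_isRecurrent_via41 _ <| isRecurrent_limitSet <|
    (isPlay_outcome hσ validStrategy_via41 (v := v)).stepWith consistent_outcome_one
  have hPs : ∀ i, InfOften (Ps i) (outcome σ (positional via41) v) := fun i =>
    h0123.elim (infOften_of_subset_limitSet (hP i).1) (infOften_of_subset_limitSet (hP i).2)
  obtain ⟨a, ha, rfl⟩ := (infOften_iff_inter_limitSet_nonempty _ _).1
    (hwin.outcome_zero hσ validStrategy_via41 ⟨respects_outcome hτ v, hPs⟩).1
  exact h6 ha

theorem consistent_of_forall_mem_01 {τ : Strategy} (hτ : ValidStrategy 1 τ) {w : ℕ → V}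
    (hw : IsPlay w) (hlow : ∀ k, w k ∈ ({0, 1} : Set V)) : Consistent 1 τ w := fun k hk => by
  have forced : ∀ c, ρ 1 0 c → c = 1 := by decide
  have h0 : w k = 0 :=
    (by decide : ∀ a : V, a ∈ ({0, 1} : Set V) → owner a = 1 → a = 0) _ (hlow k) hk
  have hnext := hw k
  rw [h0] at hnext ⊢
  rw [forced _ hnext, forced _ (hτ _ 0 rfl)]

theorem not_ensures_via45 {ι : Type*} {ρ' : V → V → Prop} {Ps : ι → Set V} {σ τ : Strategy}
    {v : V} (hσ : ValidStrategy 0 σ) (hτ : ValidStrategy 1 τ)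
    (hτP : Ensures 1 τ v (fun w => ∀ i, InfOften (Ps i) w))
    (h01 : ρ' 0 1) (h23 : ρ' 2 3) (h45 : ρ' 4 5) (h63 : ρ' 6 3)
    (hP : ∀ i, ({2, 3} ∩ Ps i).Nonempty ∧ ({3, 4, 5, 6} ∩ Ps i).Nonempty) :
    ¬ Ensures 0 σ v (fun w => GR1Assumption ρ' Ps w → InfOften G1 w ∧ InfOften G2 w) := by
  intro hwin
  set w := outcome σ (positional via45) v
  have hw : IsPlay w := isPlay_outcome hσ validStrategy_via45
  have hρ' : Respects ρ' w := respects_outcome (fun _ a ha => by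
    fin_cases a <;> first | exact absurd ha (by decide) | assumption) v
  by_cases hlow : ∀ k, w k ∈ ({0, 1} : Set V)
  · obtain ⟨k, -, hk⟩ := (hwin w hw rfl consistent_outcome_zero
      ⟨hρ', hτP w hw rfl (consistent_of_forall_mem_01 hτ hw hlow)⟩).1 0
    exact absurd (hk ▸ hlow k) (by decide)
  · obtain ⟨k, hk⟩ := not_forall.1 hlow
    have hstay : ∀ a b, StepWith 1 via45 a b → a ∈ ({0, 1} : Set V)ᶜ → b ∈ ({0, 1} : Set V)ᶜ :=
      fun a b hab ha hb => by
        obtain ⟨rfl, rfl⟩ := eq_four_one_of_enters_01 a b hab.1 ha hb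
        exact absurd (hab.2 rfl) (by decide)
    have hout := limitSet_subset_of_eventually <|
      eventually_mem_of_closed (hw.stepWith consistent_outcome_one) hstay hk
    have hPs : ∀ i, InfOften (Ps i) w := fun i =>
      (of_isRecurrent_via45 _ (isRecurrent_limitSet (hw.stepWith consistent_outcome_one)) hout).elim
        (infOften_of_subset_limitSet (hP i).1) (infOften_of_subset_limitSet (hP i).2)
    obtain ⟨a, ha, rfl⟩ := (infOften_iff_inter_limitSet_nonempty _ _).1
      (hwin w hw rfl consistent_outcome_zero ⟨hρ', hPs⟩).2
    exact hout ha (by simp)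

/-- nonexistence of a GR(1) assumption: in the game of Figure 2,
for every initial node `v`, there is no GR(1) property `□ρ' ∧ ⋀_{i < n} □◇(Ps i)`
— with `Ps i ⊆ V` sets of nodes and `ρ' ⊆ ρ1` a subset of player 1's edges —
such that both:
(i) player 1, restricted to choosing only edges in `ρ'`, has a strategy from `v`
all of whose consistent plays satisfy `⋀_{i < n} □◇(Ps i)`, and
(ii) player 0 has a strategy from `v` all of whose consistent plays satisfy
`(□ρ' ∧ ⋀_{i < n} □◇(Ps i)) → (□◇G1 ∧ □◇G2)`, where a play satisfies `□ρ'` if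
every step taken from a node owned by player 1 is an edge of `ρ'`. -/
theorem no_gr1_assumption (v : V) :
    ¬ ∃ (n : ℕ) (Ps : Fin n → Set V) (ρ' : V → V → Prop),
        (∀ a b : V, ρ' a b → ρ 1 a b) ∧
        (∃ σ : Strategy,
          (∀ (h : List V) (u : V), owner u = 1 → ρ' u (σ h u)) ∧
          ∀ w : ℕ → V, IsPlay w → w 0 = v → Consistent 1 σ w →
            ∀ i : Fin n, InfOften (Ps i) w) ∧
        (∃ σ : Strategy, ValidStrategy 0 σ ∧
          ∀ w : ℕ → V, IsPlay w → w 0 = v → Consistent 0 σ w →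
            ((∀ k : ℕ, owner (w k) = 1 → ρ' (w k) (w (k + 1))) ∧
              ∀ i : Fin n, InfOften (Ps i) w) →
            (InfOften G1 w ∧ InfOften G2 w)) := by
  rintro ⟨n, Ps, ρ', hsub, ⟨σ1, (hσ1ρ' : MovesAlong ρ' σ1), (hσ1P : Ensures 1 σ1 v _)⟩,
    ⟨σ0, hσ0, (hσ0win : Ensures 0 σ0 v (fun w => GR1Assumption ρ' Ps w → _))⟩⟩
  have hσ1 : ValidStrategy 1 σ1 := fun h u hu => hsub _ _ (hσ1ρ' h u hu)
  have h01 : ρ' 0 1 := MovesAlong.rel_of_forced hσ1ρ' hsub (by decide) (by decide)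
  have h23 : ρ' 2 3 := MovesAlong.rel_of_forced hσ1ρ' hsub (by decide) (by decide)
  have h63 : ρ' 6 3 := MovesAlong.rel_of_forced hσ1ρ' hsub (by decide) (by decide)
  have hP23 : ∀ i, ({2, 3} ∩ Ps i).Nonempty := fun i =>
    (hσ1P.outcome_one validStrategy_cycle23 hσ1 i).inter_nonempty_of_limitSet_subset
      (limitSet_outcome_cycle23 hσ1 v)
  have h41 : ρ' 4 1 := by
    have hA : GR1Assumption ρ' Ps (outcome σ0 σ1 v) :=
      ⟨respects_outcome hσ1ρ' v, hσ1P.outcome_one hσ0 hσ1⟩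
    exact rel_four_one_of_infOften (isPlay_outcome hσ0 hσ1) hA.1 (hσ0win.outcome_zero hσ0 hσ1 hA)
  have hPs := fun i => hσ1P.outcome_one validStrategy_avoid2 hσ1 i
  rcases limitSet_outcome_avoid2 hσ1 hσ1ρ' v with hlim | ⟨h45, hlim⟩
  · exact not_ensures_via41 hσ0 h01 h23 h41 h63
      (fun i => ⟨(hPs i).inter_nonempty_of_limitSet_subset hlim, hP23 i⟩) v hσ0win
  · exact not_ensures_via45 hσ0 hσ1 hσ1P h01 h23 h45 h63
      (fun i => ⟨hP23 i, (hPs i).inter_nonempty_of_limitSet_subset hlim⟩) hσ0win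

end Fig2
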